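/- (Corollary 1, Cramér–von Mises version.) Let r be a probability measure on a measurable parameter space Θ and D ⊆ Θ a measurable set with w := r(D) > 0 (Assumption 1). For each n ∈ ℕ, let κ_n be a Markov kernel from Θ to [0,1] such that κ_n(θ) is the uniform distribution on [0,1] for every θ ∉ D, and for every θ ∈ D and every ε > 0, κ_n(θ)([0,ε]) → 1 as n → ∞. For B, n ∈ ℕ, let θ_1,…,θ_B be i.i.d. with law r and, conditionally on them, let p_1,…,p_B be independent with p_i ∼ κ_n(θ_i); let W_{B,n} = ∫₀¹ (F̂_B(t) − t)² dt be the Cramér–von Mises statistic of the p-values, and let c_B(α) be the (1−α)-quantile of the CvM statistic computed from B i.i.d. Unif[0,1] variables. Then for every α ∈ (0,1) and all sequences B_k → ∞ and n_k → ∞, P(W_{B_k,n_k} > c_{B_k}(α)) → 1 as k → ∞; that is, the α-level global goodness-of-fit test based on the Cramér–von Mises statistic is statistically consistent. -/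

import Mathlib

open MeasureTheory Filter
open scoped ENNReal Classical

/-- Empirical cumulative distribution function of the first `B` of the random
variables `X` evaluated at the sample point `ω` and the argument `t`:
`F̂_B(t) = (1/B) · #{ i < B : X i ω ≤ t }`. -/
noncomputable def ecdf {Ω : Type*} (X : ℕ → Ω → ℝ) (B : ℕ) (ω : Ω) (t : ℝ) : ℝ :=
  ((Finset.range B).filter (fun i => X i ω ≤ t)).card / B

/-- The Cramér–von Mises statistic against the uniform distribution on `[0,1]`
computed from the first `B` of the random variables `X`:
`W_B = ∫₀¹ (F̂_B(t) - t)² dt`. -/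
noncomputable def cvmStat {Ω : Type*} (X : ℕ → Ω → ℝ) (B : ℕ) (ω : Ω) : ℝ :=
  ∫ t in (0 : ℝ)..1, (ecdf X B ω t - t) ^ 2

/-!
Under the null hypothesis, Fubini gives `E W_B = ∫₀¹ Var F̂_B(t) dt ≤ 1 / (4B)`, so by Markov's
inequality the critical values `c_B(α)` tend to `0`. Under the alternative, the common law of the
`p`-values puts mass tending to `w + (1 - w) / 2` on `(-∞, 1/2]`; by Chebyshev's inequality
`F̂_B(1/2) ≥ 1/2 + w/8` with probability `1 - O(1/B)`, and monotonicity of `F̂_B` then forces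
`W_B ≥ (w/8)³/8`, which eventually exceeds `c_B(α)`.
-/

open ProbabilityTheory

section ecdf

variable {Ω : Type*} (X : ℕ → Ω → ℝ) (B : ℕ) (ω : Ω)

lemma ecdf_eq_sum_indicator (t : ℝ) :
    ecdf X B ω t = (∑ i ∈ Finset.range B, (Set.Iic t).indicator 1 (X i ω)) / B := by
  simp [ecdf, Finset.sum_boole, Set.indicator_apply]

lemma ecdf_nonneg (t : ℝ) : 0 ≤ ecdf X B ω t := by
  unfold ecdf; positivity

lemma ecdf_le_one (t : ℝ) : ecdf X B ω t ≤ 1 := by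
  unfold ecdf
  refine div_le_one_of_le₀ ?_ (Nat.cast_nonneg B)
  exact_mod_cast (Finset.card_filter_le _ _).trans (Finset.card_range B).le

lemma ecdf_mono : Monotone (ecdf X B ω) := fun s t hst => by
  unfold ecdf
  gcongr

lemma measurable_ecdf_uncurry [MeasurableSpace Ω] {X : ℕ → Ω → ℝ} (hX : ∀ i, Measurable (X i))
    (B : ℕ) : Measurable fun z : Ω × ℝ => ecdf X B z.1 z.2 := by
  simp_rw [ecdf_eq_sum_indicator]
  refine Measurable.div_const (Finset.measurable_sum _ fun i _ => ?_) _
  exact measurable_const.indicator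
    (measurableSet_le ((hX i).comp measurable_fst) measurable_snd)

end ecdf

section cvmStat

variable {Ω : Type*} (X : ℕ → Ω → ℝ) (B : ℕ) (ω : Ω)

lemma abs_ecdf_sub_le_one {t : ℝ} (ht : t ∈ Set.Icc (0 : ℝ) 1) : |ecdf X B ω t - t| ≤ 1 :=
  abs_le.2 ⟨by linarith [ecdf_nonneg X B ω t, ht.2], by linarith [ecdf_le_one X B ω t, ht.1]⟩

lemma intervalIntegrable_cvm_integrand :
    IntervalIntegrable (fun t => (ecdf X B ω t - t) ^ 2) volume 0 1 := by
  rw [intervalIntegrable_iff_integrableOn_Ioc_of_le zero_le_one]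
  refine IntegrableOn.of_bound measure_Ioc_lt_top
    ((((ecdf_mono X B ω).measurable).sub measurable_id).pow_const 2).aestronglyMeasurable 1 ?_
  filter_upwards [ae_restrict_mem measurableSet_Ioc] with t ht
  rw [norm_pow, Real.norm_eq_abs]
  exact pow_le_one₀ (abs_nonneg _) (abs_ecdf_sub_le_one X B ω (Set.Ioc_subset_Icc_self ht))

lemma cvmStat_nonneg : 0 ≤ cvmStat X B ω :=
  intervalIntegral.integral_nonneg zero_le_one fun _ _ => sq_nonneg _

/-- A jump of the empirical CDF by `δ` above the diagonal at `ε` keeps it at least `δ / 2`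
above the diagonal on `[ε, ε + δ / 2]`. -/
lemma le_cvmStat_of_add_le_ecdf {ε δ : ℝ} (hε : 0 ≤ ε) (hδ : 0 < δ) (h1 : ε + δ ≤ 1)
    (h : ε + δ ≤ ecdf X B ω ε) : δ ^ 3 / 8 ≤ cvmStat X B ω :=
  calc δ ^ 3 / 8 = ∫ _ in ε..ε + δ / 2, (δ / 2) ^ 2 := by simp; ring
    _ ≤ ∫ t in ε..ε + δ / 2, (ecdf X B ω t - t) ^ 2 := by
        refine intervalIntegral.integral_mono_on (by linarith) intervalIntegrable_const
          ((intervalIntegrable_cvm_integrand X B ω).mono_set ?_) fun t ht => ?_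
        · rw [Set.uIcc_of_le (by linarith), Set.uIcc_of_le zero_le_one]
          exact Set.Icc_subset_Icc hε (by linarith)
        · have := h.trans (ecdf_mono X B ω ht.1)
          exact pow_le_pow_left₀ (by positivity) (by linarith [ht.2]) 2
    _ ≤ cvmStat X B ω :=
        intervalIntegral.integral_mono_interval hε (by linarith) (by linarith)
          (ae_of_all _ fun _ => sq_nonneg _) (intervalIntegrable_cvm_integrand X B ω)

lemma ofReal_cvmStat_eq_lintegral :
    ENNReal.ofReal (cvmStat X B ω)
      = ∫⁻ t in Set.Ioc (0 : ℝ) 1, ENNReal.ofReal ((ecdf X B ω t - t) ^ 2) := by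
  rw [cvmStat, intervalIntegral.integral_of_le zero_le_one,
    ofReal_integral_eq_lintegral_ofReal (intervalIntegrable_cvm_integrand X B ω).1
      (ae_of_all _ fun _ => sq_nonneg _)]

end cvmStat

section moments

variable {Ω : Type*} [MeasurableSpace Ω] {μ : Measure Ω} [IsProbabilityMeasure μ]
  {X : ℕ → Ω → ℝ}

lemma measurable_ecdf (hX : ∀ i, Measurable (X i)) (B : ℕ) (t : ℝ) :
    Measurable fun ω => ecdf X B ω t :=
  Measurable.of_uncurry_right (f := fun ω t => ecdf X B ω t) (measurable_ecdf_uncurry hX B)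

lemma indicator_Iic_one_mem_Icc (t x : ℝ) :
    (Set.Iic t).indicator (1 : ℝ → ℝ) x ∈ Set.Icc 0 1 := by
  by_cases h : x ≤ t <;> simp [h]

lemma measurable_indicator_Iic_one (t : ℝ) : Measurable ((Set.Iic t).indicator (1 : ℝ → ℝ)) :=
  measurable_one.indicator measurableSet_Iic

lemma memLp_indicator_Iic_comp (hX : ∀ i, Measurable (X i)) (t : ℝ) (p : ℝ≥0∞) (i : ℕ) :
    MemLp (fun ω => (Set.Iic t).indicator (1 : ℝ → ℝ) (X i ω)) p μ :=
  memLp_of_bounded (ae_of_all _ fun ω => indicator_Iic_one_mem_Icc t (X i ω))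
    ((measurable_indicator_Iic_one t).comp (hX i)).aestronglyMeasurable p

lemma memLp_ecdf (hX : ∀ i, Measurable (X i)) (B : ℕ) (t : ℝ) (p : ℝ≥0∞) :
    MemLp (fun ω => ecdf X B ω t) p μ :=
  memLp_of_bounded (ae_of_all _ fun ω => ⟨ecdf_nonneg X B ω t, ecdf_le_one X B ω t⟩)
    (measurable_ecdf hX B t).aestronglyMeasurable p

lemma integral_ecdf (hX : ∀ i, Measurable (X i)) {ν : Measure ℝ} (hlaw : ∀ i, μ.map (X i) = ν)
    {B : ℕ} (hB : 0 < B) (t : ℝ) : μ[fun ω => ecdf X B ω t] = ν.real (Set.Iic t) := by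
  have hterm : ∀ i, ∫ ω, (Set.Iic t).indicator (1 : ℝ → ℝ) (X i ω) ∂μ = ν.real (Set.Iic t) :=
      fun i => by
    rw [← integral_map (hX i).aemeasurable
      (measurable_indicator_Iic_one t).aestronglyMeasurable, hlaw i,
      integral_indicator_one measurableSet_Iic]
  simp_rw [ecdf_eq_sum_indicator]
  rw [integral_div, integral_finsetSum _ fun i _ =>
    (memLp_indicator_Iic_comp hX t 1 i).integrable le_rfl]
  simp only [hterm, Finset.sum_const, Finset.card_range, nsmul_eq_mul]
  field_simp

lemma variance_ecdf_le (hX : ∀ i, Measurable (X i)) (hindep : iIndepFun X μ) (B : ℕ) (t : ℝ) :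
    Var[fun ω => ecdf X B ω t; μ] ≤ 1 / (4 * B) := by
  set Y : ℕ → Ω → ℝ := fun i ω => (Set.Iic t).indicator (1 : ℝ → ℝ) (X i ω)
  have hYindep : iIndepFun Y μ :=
    hindep.comp _ fun _ => measurable_indicator_Iic_one t
  have hYvar : ∀ i, Var[Y i; μ] ≤ 1 / 4 := fun i => by
    have := variance_le_sq_of_bounded (ae_of_all μ fun ω => indicator_Iic_one_mem_Icc t (X i ω))
      (memLp_indicator_Iic_comp hX t 1 i).aestronglyMeasurable.aemeasurable
    norm_num at this ⊢; exact this
  have hsum : Var[∑ i ∈ Finset.range B, Y i; μ] ≤ B / 4 := by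
    rw [IndepFun.variance_sum (fun i _ => memLp_indicator_Iic_comp hX t 2 i)
      fun i _ j _ hij => hYindep.indepFun hij]
    calc _ ≤ ∑ _i ∈ Finset.range B, (1 / 4 : ℝ) := Finset.sum_le_sum fun i _ => hYvar i
      _ = B / 4 := by simp [div_eq_mul_inv]
  have hecdf : (fun ω => ecdf X B ω t) = fun ω => (∑ i ∈ Finset.range B, Y i) ω * (B : ℝ)⁻¹ := by
    ext ω; simp [ecdf_eq_sum_indicator, Y, div_eq_mul_inv]
  rw [hecdf, variance_mul_const]
  rcases Nat.eq_zero_or_pos B with rfl | hB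
  · simp
  calc _ ≤ (B / 4 : ℝ) * (B : ℝ)⁻¹ ^ 2 := by gcongr
    _ = 1 / (4 * B) := by field_simp

end moments

section deviation

variable {Ω : Type*} [MeasurableSpace Ω] {μ : Measure Ω} [IsProbabilityMeasure μ]
  {X : ℕ → Ω → ℝ} {ν : Measure ℝ}

lemma measure_le_abs_ecdf_sub_le (hX : ∀ i, Measurable (X i)) (hindep : iIndepFun X μ)
    (hlaw : ∀ i, μ.map (X i) = ν) {B : ℕ} (hB : 0 < B) (t : ℝ) {η : ℝ} (hη : 0 < η) :
    μ {ω | η ≤ |ecdf X B ω t - ν.real (Set.Iic t)|} ≤ ENNReal.ofReal (1 / (4 * B * η ^ 2)) :=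
  calc _ ≤ ENNReal.ofReal (Var[fun ω => ecdf X B ω t; μ] / η ^ 2) := by
        simpa only [integral_ecdf hX hlaw hB t] using
          meas_ge_le_variance_div_sq (memLp_ecdf (μ := μ) hX B t 2) hη
    _ ≤ ENNReal.ofReal (1 / (4 * B) / η ^ 2) := by
        gcongr; exact variance_ecdf_le hX hindep B t
    _ = _ := by rw [div_div]

lemma lintegral_sq_ecdf_sub_le (hX : ∀ i, Measurable (X i)) (hindep : iIndepFun X μ)
    (hlaw : ∀ i, μ.map (X i) = ν) {B : ℕ} (hB : 0 < B) (t : ℝ) :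
    ∫⁻ ω, ENNReal.ofReal ((ecdf X B ω t - ν.real (Set.Iic t)) ^ 2) ∂μ
      ≤ ENNReal.ofReal (1 / (4 * B)) := by
  have := evariance_eq_lintegral_ofReal (fun ω => ecdf X B ω t) μ
  rw [integral_ecdf hX hlaw hB t, ← (memLp_ecdf hX B t 2).ofReal_variance_eq] at this
  rw [← this]
  exact ENNReal.ofReal_le_ofReal (variance_ecdf_le hX hindep B t)

/-- The empirical CDF at `ε` overshoots the diagonal by `δ` unless it deviates by `δ` from its
mean `ν (-∞, ε] ≥ ε + 2δ`. -/
lemma measure_cvmStat_lt_le (hX : ∀ i, Measurable (X i)) (hindep : iIndepFun X μ)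
    (hlaw : ∀ i, μ.map (X i) = ν) {B : ℕ} (hB : 0 < B) {ε δ : ℝ} (hε : 0 ≤ ε) (hδ : 0 < δ)
    (h1 : ε + δ ≤ 1) (hq : ε + 2 * δ ≤ ν.real (Set.Iic ε)) :
    μ {ω | cvmStat X B ω < δ ^ 3 / 8} ≤ ENNReal.ofReal (1 / (4 * B * δ ^ 2)) := by
  refine (measure_mono fun ω (hω : cvmStat X B ω < δ ^ 3 / 8) => ?_).trans
    (measure_le_abs_ecdf_sub_le hX hindep hlaw hB ε hδ)
  show δ ≤ |ecdf X B ω ε - ν.real (Set.Iic ε)|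
  by_contra! hdev
  have hjump : ε + δ ≤ ecdf X B ω ε := by
    have := (abs_lt.1 hdev).1
    linarith
  exact (not_le.2 hω) (le_cvmStat_of_add_le_ecdf X B ω hε hδ h1 hjump)

end deviation

section null

variable {Ω : Type*} [MeasurableSpace Ω] {μ : Measure Ω} [IsProbabilityMeasure μ]
  {U : ℕ → Ω → ℝ}

lemma uniform_real_Iic {t : ℝ} (ht : t ∈ Set.Icc (0 : ℝ) 1) :
    (volume.restrict (Set.Icc (0 : ℝ) 1)).real (Set.Iic t) = t := by
  have hset : Set.Iic t ∩ Set.Icc 0 1 = Set.Icc 0 t := by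
    ext x
    simp only [Set.mem_inter_iff, Set.mem_Iic, Set.mem_Icc]
    exact ⟨fun hx => ⟨hx.2.1, hx.1⟩, fun hx => ⟨hx.2, hx.1, hx.2.trans ht.2⟩⟩
  rw [measureReal_restrict_apply measurableSet_Iic, hset, Real.volume_real_Icc_of_le ht.1, sub_zero]

lemma measurable_cvm_integrand_uncurry {X : ℕ → Ω → ℝ} (hX : ∀ i, Measurable (X i)) (B : ℕ) :
    Measurable fun z : Ω × ℝ => ENNReal.ofReal ((ecdf X B z.1 z.2 - z.2) ^ 2) :=
  (((measurable_ecdf_uncurry hX B).sub measurable_snd).pow_const 2).ennreal_ofReal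

lemma measurable_ofReal_cvmStat {X : ℕ → Ω → ℝ} (hX : ∀ i, Measurable (X i)) (B : ℕ) :
    Measurable fun ω => ENNReal.ofReal (cvmStat X B ω) := by
  simp_rw [ofReal_cvmStat_eq_lintegral]
  exact (measurable_cvm_integrand_uncurry hX B).lintegral_prod_right'

lemma lintegral_cvmStat_le (hU : ∀ i, Measurable (U i)) (hindep : iIndepFun U μ)
    (hlaw : ∀ i, μ.map (U i) = volume.restrict (Set.Icc (0 : ℝ) 1)) {B : ℕ} (hB : 0 < B) :
    ∫⁻ ω, ENNReal.ofReal (cvmStat U B ω) ∂μ ≤ ENNReal.ofReal (1 / (4 * B)) := by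
  simp_rw [ofReal_cvmStat_eq_lintegral]
  rw [lintegral_lintegral_swap (measurable_cvm_integrand_uncurry hU B).aemeasurable]
  calc _ ≤ ∫⁻ t in Set.Ioc (0 : ℝ) 1, ENNReal.ofReal (1 / (4 * B)) := by
        refine setLIntegral_mono measurable_const fun t ht => ?_
        simpa only [uniform_real_Iic (Set.Ioc_subset_Icc_self ht)] using
          lintegral_sq_ecdf_sub_le hU hindep hlaw hB t
    _ = ENNReal.ofReal (1 / (4 * B)) := by simp

lemma measure_lt_cvmStat_le (hU : ∀ i, Measurable (U i)) (hindep : iIndepFun U μ)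
    (hlaw : ∀ i, μ.map (U i) = volume.restrict (Set.Icc (0 : ℝ) 1)) {B : ℕ} (hB : 0 < B)
    {s : ℝ} (hs : 0 < s) :
    μ {ω | s < cvmStat U B ω} ≤ ENNReal.ofReal (1 / (4 * B * s)) :=
  calc _ ≤ μ {ω | ENNReal.ofReal s ≤ ENNReal.ofReal (cvmStat U B ω)} :=
        measure_mono fun ω (h : s < cvmStat U B ω) => ENNReal.ofReal_le_ofReal h.le
    _ ≤ (∫⁻ ω, ENNReal.ofReal (cvmStat U B ω) ∂μ) / ENNReal.ofReal s :=
        meas_ge_le_lintegral_div (measurable_ofReal_cvmStat hU B).aemeasurable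
          (by simpa using hs) ENNReal.ofReal_ne_top
    _ ≤ ENNReal.ofReal (1 / (4 * B)) / ENNReal.ofReal s := by
        gcongr; exact lintegral_cvmStat_le hU hindep hlaw hB
    _ = _ := by rw [← ENNReal.ofReal_div_of_pos hs, div_div]

end null

noncomputable def quantile {Ω : Type*} [MeasurableSpace Ω] (μ : Measure Ω) (Z : Ω → ℝ) (β : ℝ) :
    ℝ :=
  sInf {t : ℝ | β ≤ (μ {ω | Z ω ≤ t}).toReal}

lemma tendsto_one_div_mul_natCast_mul {ι : Type*} {l : Filter ι} {u : ι → ℕ}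
    (hu : Tendsto u l atTop) (a b : ℝ) : Tendsto (fun j => 1 / (a * u j * b)) l (nhds 0) :=
  ((tendsto_const_div_atTop_nhds_zero_nat (1 / (a * b))).comp hu).congr fun j => by
    simp only [Function.comp]; ring

section quantile

variable {Ω : Type*} [MeasurableSpace Ω] {μ : Measure Ω} [IsProbabilityMeasure μ]

lemma quantile_le_of_measure_lt_le {Z : Ω → ℝ} (hZ : ∀ ω, 0 ≤ Z ω) {α s : ℝ} (hα0 : 0 ≤ α)
    (hα1 : α < 1) (h : μ {ω | s < Z ω} ≤ ENNReal.ofReal α) : quantile μ Z (1 - α) ≤ s := by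
  refine csInf_le ⟨0, fun t (ht : 1 - α ≤ _) => ?_⟩ ?_
  · by_contra! hneg
    have hempty : {ω | Z ω ≤ t} = ∅ :=
      Set.eq_empty_of_forall_notMem fun ω (hω : Z ω ≤ t) => (hZ ω).not_gt (hω.trans_lt hneg)
    rw [hempty, measure_empty, ENNReal.toReal_zero] at ht
    linarith
  · have hcover : 1 ≤ μ {ω | Z ω ≤ s} + ENNReal.ofReal α :=
      calc 1 = μ Set.univ := measure_univ.symm
        _ ≤ μ {ω | Z ω ≤ s} + μ {ω | Z ω ≤ s}ᶜ := measure_univ_le_add_compl _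
        _ ≤ μ {ω | Z ω ≤ s} + ENNReal.ofReal α := by
          gcongr
          simpa only [Set.compl_ofPred, not_le] using h
    have := ENNReal.toReal_mono (by finiteness) hcover
    rw [ENNReal.toReal_add (measure_ne_top _ _) ENNReal.ofReal_ne_top, ENNReal.toReal_ofReal hα0,
      ENNReal.toReal_one] at this
    show 1 - α ≤ _
    linarith

lemma eventually_quantile_cvmStat_le {U : ℕ → Ω → ℝ} (hU : ∀ i, Measurable (U i))
    (hindep : iIndepFun U μ) (hlaw : ∀ i, μ.map (U i) = volume.restrict (Set.Icc (0 : ℝ) 1))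
    {α : ℝ} (hα : α ∈ Set.Ioo (0 : ℝ) 1) {s : ℝ} (hs : 0 < s) :
    ∀ᶠ B in atTop, quantile μ (cvmStat U B) (1 - α) ≤ s := by
  filter_upwards [(tendsto_one_div_mul_natCast_mul tendsto_id 4 s).eventually
    (eventually_le_nhds hα.1), eventually_gt_atTop 0] with B hB hB0
  exact quantile_le_of_measure_lt_le (cvmStat_nonneg U B) hα.1.le hα.2
    ((measure_lt_cvmStat_le hU hindep hlaw hB0 hs).trans (ENNReal.ofReal_le_ofReal hB))

end quantile

section mixture

variable {Θ : Type*} [MeasurableSpace Θ] {r : Measure Θ}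

lemma tendsto_bind_apply [IsFiniteMeasure r] {β : Type*} [MeasurableSpace β]
    {κ : ℕ → Kernel Θ β} [∀ n, IsMarkovKernel (κ n)] {s : Set β} (hs : MeasurableSet s)
    {g : Θ → ℝ≥0∞} (hlim : ∀ᵐ θ ∂r, Tendsto (fun n => κ n θ s) atTop (nhds (g θ))) :
    Tendsto (fun n => r.bind (fun θ => κ n θ) s) atTop (nhds (∫⁻ θ, g θ ∂r)) := by
  simp_rw [Measure.bind_apply hs (Kernel.aemeasurable _)]
  exact tendsto_lintegral_of_dominated_convergence 1 (fun n => Kernel.measurable_coe _ hs)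
    (fun n => ae_of_all _ fun θ => prob_le_one) (by simp) hlim

lemma tendsto_bind_real_Iic [IsProbabilityMeasure r] {D : Set Θ} (hD : MeasurableSet D)
    {κ : ℕ → Kernel Θ ℝ} [∀ n, IsMarkovKernel (κ n)]
    (hnull : ∀ n, ∀ θ ∉ D, κ n θ = volume.restrict (Set.Icc (0 : ℝ) 1))
    (halt : ∀ θ ∈ D, ∀ ε > (0 : ℝ), Tendsto (fun n => κ n θ (Set.Icc (0 : ℝ) ε)) atTop (nhds 1))
    {ε : ℝ} (hε : ε ∈ Set.Ioc (0 : ℝ) 1) :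
    Tendsto (fun n => (r.bind fun θ => κ n θ).real (Set.Iic ε)) atTop
      (nhds (r.real D + ε * (1 - r.real D))) := by
  have hlim : ∀ θ, Tendsto (fun n => κ n θ (Set.Iic ε)) atTop
      (nhds (D.piecewise (fun _ => 1) (fun _ => ENNReal.ofReal ε) θ)) := fun θ => by
    by_cases hθ : θ ∈ D
    · simp only [Set.piecewise_eq_of_mem _ _ _ hθ]
      exact tendsto_of_tendsto_of_tendsto_of_le_of_le (halt θ hθ ε hε.1) tendsto_const_nhds
        (fun n => measure_mono Set.Icc_subset_Iic_self) fun n => prob_le_one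
    · simp only [Set.piecewise_eq_of_notMem _ _ _ hθ, hnull _ θ hθ]
      rw [← ENNReal.ofReal_toReal (measure_ne_top _ _), ← measureReal_def,
        uniform_real_Iic ⟨hε.1.le, hε.2⟩]
      exact tendsto_const_nhds
  have hint : ∫⁻ θ, D.piecewise (fun _ => 1) (fun _ => ENNReal.ofReal ε) θ ∂r
      = r D + ENNReal.ofReal ε * r Dᶜ := by
    rw [lintegral_piecewise hD]
    simp
  have := (ENNReal.tendsto_toReal (by rw [hint]; finiteness)).comp
    (tendsto_bind_apply (r := r) measurableSet_Iic (ae_of_all _ hlim))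
  rw [hint, ENNReal.toReal_add (measure_ne_top _ _) (by finiteness), ENNReal.toReal_mul,
    ENNReal.toReal_ofReal hε.1.le, ← measureReal_def, ← measureReal_def,
    probReal_compl_eq_one_sub hD] at this
  exact this

end mixture

lemma tendsto_measure_of_tendsto_measure_compl {Ω ι : Type*} [MeasurableSpace Ω] {μ : Measure Ω}
    [IsProbabilityMeasure μ] {l : Filter ι} {s : ι → Set Ω}
    (h : Tendsto (fun i => μ (s i)ᶜ) l (nhds 0)) : Tendsto (fun i => μ (s i)) l (nhds 1) := by
  have hlow : Tendsto (fun i => 1 - μ (s i)ᶜ) l (nhds 1) := by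
    simpa using ENNReal.Tendsto.sub tendsto_const_nhds h (Or.inl ENNReal.one_ne_top)
  refine tendsto_of_tendsto_of_tendsto_of_le_of_le hlow tendsto_const_nhds (fun i => ?_)
    fun i => prob_le_one
  rw [tsub_le_iff_right, ← measure_univ (μ := μ)]
  exact measure_univ_le_add_compl _

/-- **Corollary 1, Cramér–von Mises version: consistency of the global test.**
Let `r` be a probability measure on the parameter space `Θ` and `D ⊆ Θ` with
`r(D) > 0` (Assumption 1).  For each `n`, the Markov kernel `κ n` of local `p`-values
is uniform on `[0,1]` off `D` and concentrates at `0` on `D` as `n → ∞` (Assumption 2).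
If `p n 1, …, p n B` are (i.i.d.) local `p`-values, whose common law is the mixture
`r.bind (κ n)` obtained by drawing `θ_i ~ r` and then `p_i ~ κ n θ_i`, if
`W_{B,n}` is their Cramér–von Mises statistic against the uniform distribution, and
if `c B` is the `(1-α)`-quantile of the CvM statistic of `B` i.i.d. `Unif[0,1]`
variables, then for all sequences `B_k → ∞` and `n_k → ∞` the probability of rejection
`P(W_{B_k,n_k} > c_{B_k})` tends to `1`. -/
theorem global_cvm_test_consistent
    {Θ : Type*} [MeasurableSpace Θ] (r : Measure Θ) [IsProbabilityMeasure r]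
    (D : Set Θ) (hD : MeasurableSet D) (hw : 0 < r D)
    (κ : ℕ → ProbabilityTheory.Kernel Θ ℝ)
    (hκ : ∀ n, ProbabilityTheory.IsMarkovKernel (κ n))
    (hnull : ∀ n, ∀ θ ∉ D, (κ n) θ = volume.restrict (Set.Icc (0 : ℝ) 1))
    (halt : ∀ θ ∈ D, ∀ ε > (0 : ℝ),
      Tendsto (fun n => (κ n) θ (Set.Icc (0 : ℝ) ε)) atTop (nhds 1))
    {Ω : Type*} [MeasurableSpace Ω] (μ : Measure Ω) [IsProbabilityMeasure μ]
    (p : ℕ → ℕ → Ω → ℝ) (hpmeas : ∀ n i, Measurable (p n i))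
    (hpindep : ∀ n, ProbabilityTheory.iIndepFun (p n) μ)
    (hplaw : ∀ n i, μ.map (p n i) = r.bind (fun θ => (κ n) θ))
    {Ω' : Type*} [MeasurableSpace Ω'] (μ' : Measure Ω') [IsProbabilityMeasure μ']
    (U : ℕ → Ω' → ℝ) (hUmeas : ∀ i, Measurable (U i))
    (hUindep : ProbabilityTheory.iIndepFun U μ')
    (hUlaw : ∀ i, μ'.map (U i) = volume.restrict (Set.Icc (0 : ℝ) 1))
    (α : ℝ) (hα : α ∈ Set.Ioo (0 : ℝ) 1)
    (c : ℕ → ℝ)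
    (hc : ∀ B, c B = sInf {t : ℝ | 1 - α ≤ (μ' {ω' | cvmStat U B ω' ≤ t}).toReal})
    (Bk nk : ℕ → ℕ) (hBk : Tendsto Bk atTop atTop) (hnk : Tendsto nk atTop atTop) :
    Tendsto (fun j => μ {ω | c (Bk j) < cvmStat (p (nk j)) (Bk j) ω}) atTop
      (nhds 1) := by
  have := hκ
  set w := r.real D
  have hw0 : 0 < w := ENNReal.toReal_pos hw.ne' (measure_ne_top r D)
  have hw1 : w ≤ 1 := measureReal_le_one
  set δ := w / 8 with hδ
  have hδ0 : 0 < δ := by positivity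
  have hmix : ∀ᶠ j in atTop, 1 / 2 + 2 * δ ≤ (r.bind fun θ => κ (nk j) θ).real (Set.Iic (1 / 2)) :=
    hnk.eventually ((tendsto_bind_real_Iic hD hnull halt ⟨by norm_num, by norm_num⟩).eventually
      (eventually_ge_nhds (by linarith)))
  have hquant : ∀ᶠ j in atTop, c (Bk j) ≤ δ ^ 3 / 16 :=
    hBk.eventually ((eventually_quantile_cvmStat_le hUmeas hUindep hUlaw hα (by positivity)).mono
      fun B hB => (hc B).trans_le hB)
  have hbound : ∀ᶠ j in atTop, μ {ω | c (Bk j) < cvmStat (p (nk j)) (Bk j) ω}ᶜ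
      ≤ ENNReal.ofReal (1 / (4 * Bk j * δ ^ 2)) := by
    filter_upwards [hmix, hquant, hBk.eventually (eventually_gt_atTop 0)] with j hq hcj hB
    refine (measure_mono fun ω (hω : ¬ c (Bk j) < _) => ?_).trans
      (measure_cvmStat_lt_le (hpmeas _) (hpindep _) (hplaw _) hB (by norm_num) (by positivity)
        (by linarith) hq)
    show (_ : ℝ) < _
    linarith [not_lt.1 hω, pow_pos hδ0 3]
  have hbound_lim : Tendsto (fun j => ENNReal.ofReal (1 / (4 * Bk j * δ ^ 2))) atTop (nhds 0) :=
    ENNReal.ofReal_zero ▸ ENNReal.tendsto_ofReal (tendsto_one_div_mul_natCast_mul hBk 4 _)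
  exact tendsto_measure_of_tendsto_measure_compl (tendsto_of_tendsto_of_tendsto_of_le_of_le'
    tendsto_const_nhds hbound_lim (Eventually.of_forall fun _ => zero_le) hbound)
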